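/- For any X ∈ 𝕆^{n×k} and Y ∈ 𝕆^{m×k}, there exist orthogonal matrices U, V ∈ 𝕆^{k×k} such that (XU)ᵀ C (YV) is symmetric positive semidefinite and F(XU, YV) ≥ F(X, Y). -/

import Mathlib

/-!
Write `M = XᵀCY` in polar form `M = UP` with `U` orthogonal and `P = √(MᵀM)` positive
semidefinite, and take `V = 1`. Replacing `X` by `XU` turns `XᵀCY` into `UᵀM = P` and leaves the
denominator of `F` unchanged, while the numerator can only grow:
`tr(UP) = tr(√P · U√P) ≤ ‖√P‖_F ‖U√P‖_F = tr P` by Cauchy–Schwarz for the Frobenius inner product.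
The polar factor `U` extends the map `P x ↦ M x` from the range of `P` to an isometry of the
whole space; it is isometric because `PᵀP = MᵀM`.
-/

open Matrix

/-- The OCCA objective
`F(X, Y) = tr(XᵀCY)² / (tr(XᵀAX) · tr(YᵀBY))` with `A = S₁S₁ᵀ`, `B = S₂S₂ᵀ`, `C = S₁S₂ᵀ`. -/
noncomputable def Fobj {n m k q : ℕ}
    (S₁ : Matrix (Fin n) (Fin q) ℝ) (S₂ : Matrix (Fin m) (Fin q) ℝ)
    (X : Matrix (Fin n) (Fin k) ℝ) (Y : Matrix (Fin m) (Fin k) ℝ) : ℝ :=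
  (Matrix.trace (Xᵀ * (S₁ * S₂ᵀ) * Y)) ^ 2 /
    (Matrix.trace (Xᵀ * (S₁ * S₁ᵀ) * X) * Matrix.trace (Yᵀ * (S₂ * S₂ᵀ) * Y))

theorem LinearMap.exists_linearIsometry_comp_eq_of_norm_eq {𝕜 V W : Type*} [RCLike 𝕜]
    [AddCommGroup V] [Module 𝕜 V] [NormedAddCommGroup W] [InnerProductSpace 𝕜 W]
    [FiniteDimensional 𝕜 W] (f g : V →ₗ[𝕜] W) (h : ∀ x, ‖f x‖ = ‖g x‖) :
    ∃ O : W →ₗᵢ[𝕜] W, ∀ x, O (f x) = g x := by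
  have hker : LinearMap.ker f ≤ LinearMap.ker g := fun x hx ↦ by
    simpa [← norm_eq_zero, ← h] using hx
  let L : LinearMap.range f →ₗ[𝕜] W :=
    (LinearMap.ker f).liftQ g hker ∘ₗ f.quotKerEquivRange.symm
  have hL : ∀ x, L ⟨f x, LinearMap.mem_range_self f x⟩ = g x := fun x ↦ by
    simp [L, LinearMap.quotKerEquivRange_symm_apply_image]
  let L' : LinearMap.range f →ₗᵢ[𝕜] W :=
    { toLinearMap := L
      norm_map' := by rintro ⟨_, x, rfl⟩; simp [hL, ← h] }
  exact ⟨L'.extend, fun x ↦ (L'.extend_apply ⟨f x, LinearMap.mem_range_self f x⟩).trans (hL x)⟩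

namespace Matrix

section Unitary

variable {𝕜 n : Type*} [RCLike 𝕜] [Fintype n] [DecidableEq n]

theorem exists_mem_unitaryGroup_mul_eq_of_star_mul_self_eq {A B : Matrix n n 𝕜}
    (h : star A * A = star B * B) : ∃ U ∈ unitaryGroup n 𝕜, U * A = B := by
  let T := toEuclideanCLM (n := n) (𝕜 := 𝕜)
  have hnorm : ∀ x, ‖T A x‖ = ‖T B x‖ := fun x ↦ by
    simp only [ContinuousLinearMap.apply_norm_eq_sqrt_inner_adjoint_left,
      ← ContinuousLinearMap.star_eq_adjoint, ← map_star, ← ContinuousLinearMap.mul_def,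
      ← map_mul, h]
  obtain ⟨O, hO⟩ := LinearMap.exists_linearIsometry_comp_eq_of_norm_eq
    (T A).toLinearMap (T B).toLinearMap hnorm
  refine ⟨T.symm O.toContinuousLinearMap, ?_, EquivLike.injective T ?_⟩
  · rw [mem_unitaryGroup_iff']
    apply EquivLike.injective T
    rw [map_mul, map_star, map_one, StarAlgEquiv.apply_symm_apply,
      ContinuousLinearMap.star_eq_adjoint]
    exact O.adjoint_comp_self
  · ext1 x
    simpa [map_mul] using hO x

open scoped ComplexOrder MatrixOrder in
theorem exists_mem_unitaryGroup_posSemidef_mul_eq (M : Matrix n n 𝕜) :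
    ∃ U ∈ unitaryGroup n 𝕜, ∃ P : Matrix n n 𝕜, P.PosSemidef ∧ U * P = M := by
  obtain ⟨U, hU, hUP⟩ := exists_mem_unitaryGroup_mul_eq_of_star_mul_self_eq
    (A := CFC.sqrt (star M * M)) (B := M) <| by
      rw [(CFC.sqrt_nonneg _).isSelfAdjoint.star_eq,
        CFC.sqrt_mul_sqrt_self _ (star_mul_self_nonneg M)]
  exact ⟨U, hU, _, (CFC.sqrt_nonneg _).posSemidef, hUP⟩

end Unitary

section Real

variable {m n : Type*} [Fintype m] [Fintype n]

theorem trace_transpose_mul_eq_sum (A B : Matrix m n ℝ) :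
    trace (Aᵀ * B) = ∑ p : m × n, A p.1 p.2 * B p.1 p.2 := by
  rw [Fintype.sum_prod_type, Finset.sum_comm]
  rfl

theorem trace_transpose_mul_sq_le (A B : Matrix m n ℝ) :
    trace (Aᵀ * B) ^ 2 ≤ trace (Aᵀ * A) * trace (Bᵀ * B) := by
  simpa only [trace_transpose_mul_eq_sum, ← sq] using Finset.sum_mul_sq_le_sq_mul_sq
    Finset.univ (fun p : m × n ↦ A p.1 p.2) (fun p ↦ B p.1 p.2)

variable [DecidableEq n]

open scoped MatrixOrder in
theorem trace_mul_sq_le_trace_sq {U P : Matrix n n ℝ} (hU : U ∈ orthogonalGroup n ℝ)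
    (hP : P.PosSemidef) : trace (U * P) ^ 2 ≤ trace P ^ 2 := by
  set R := CFC.sqrt P
  have hRR : R * R = P := CFC.sqrt_mul_sqrt_self P hP.nonneg
  have hRt : Rᵀ = R := by
    simpa [IsHermitian, conjTranspose_eq_transpose_of_trivial] using
      (CFC.sqrt_nonneg P).posSemidef.isHermitian
  calc trace (U * P) ^ 2 = trace (Rᵀ * (U * R)) ^ 2 := by
        rw [hRt, trace_mul_comm R, mul_assoc, hRR]
    _ ≤ trace (Rᵀ * R) * trace ((U * R)ᵀ * (U * R)) := trace_transpose_mul_sq_le _ _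
    _ = trace P ^ 2 := by
        rw [transpose_mul, mul_assoc, ← mul_assoc Uᵀ, (mem_orthogonalGroup_iff' _ _).mp hU,
          one_mul, hRt, hRR, sq]

theorem trace_transpose_mul_mul_eq_of_mem_orthogonalGroup {U : Matrix n n ℝ}
    (hU : U ∈ orthogonalGroup n ℝ) (X : Matrix m n ℝ) (A : Matrix m m ℝ) :
    trace ((X * U)ᵀ * A * (X * U)) = trace (Xᵀ * A * X) := by
  rw [transpose_mul, show Uᵀ * Xᵀ * A * (X * U) = Uᵀ * (Xᵀ * A * X) * U by
    simp only [Matrix.mul_assoc], trace_mul_cycle, (mem_orthogonalGroup_iff _ _).mp hU, one_mul]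

end Real

end Matrix

theorem exists_orthogonal_posSemidef_Fobj_ge
    (n m k q : ℕ)
    (S₁ : Matrix (Fin n) (Fin q) ℝ) (S₂ : Matrix (Fin m) (Fin q) ℝ)
    (X : Matrix (Fin n) (Fin k) ℝ) (Y : Matrix (Fin m) (Fin k) ℝ) :
    ∃ U V : Matrix (Fin k) (Fin k) ℝ, Uᵀ * U = 1 ∧ Vᵀ * V = 1 ∧
      ((X * U)ᵀ * (S₁ * S₂ᵀ) * (Y * V)).PosSemidef ∧
      Fobj S₁ S₂ X Y ≤ Fobj S₁ S₂ (X * U) (Y * V) := by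
  set M := Xᵀ * (S₁ * S₂ᵀ) * Y
  obtain ⟨U, hU, P, hP, hUP⟩ := M.exists_mem_unitaryGroup_posSemidef_mul_eq
  have hUt : Uᵀ * U = 1 := (mem_orthogonalGroup_iff' _ _).mp hU
  have hXU : (X * U)ᵀ * (S₁ * S₂ᵀ) * Y = P := by
    rw [← one_mul P, ← hUt, mul_assoc, hUP]
    simp only [M, transpose_mul, Matrix.mul_assoc]
  have hden : 0 ≤ trace (Xᵀ * (S₁ * S₁ᵀ) * X) * trace (Yᵀ * (S₂ * S₂ᵀ) * Y) := by
    have hgram {l : ℕ} (Z : Matrix (Fin l) (Fin k) ℝ) (S : Matrix (Fin l) (Fin q) ℝ) :=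
      ((posSemidef_self_mul_conjTranspose S).conjTranspose_mul_mul_same Z).trace_nonneg
    simp only [conjTranspose_eq_transpose_of_trivial] at hgram
    exact mul_nonneg (hgram X S₁) (hgram Y S₂)
  refine ⟨U, 1, hUt, by simp, by rwa [Matrix.mul_one, hXU], ?_⟩
  rw [Matrix.mul_one, Fobj, Fobj, hXU, trace_transpose_mul_mul_eq_of_mem_orthogonalGroup hU]
  refine div_le_div_of_nonneg_right ?_ hden
  calc trace M ^ 2 = trace (U * P) ^ 2 := by rw [hUP]
    _ ≤ trace P ^ 2 := trace_mul_sq_le_trace_sq hU hP
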